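/- Under the hyperbolic-secant perturbation with bandwidth h > 0, the perturbed calibration function η(s) = E_{w_s}[η₀] satisfies the uniform derivative bound sup_{s ∈ [0,1]} |η'(s)| ≤ tanh(1/h)/(2h) ≤ 1/(2h), for any probability measure μ on [0,1] and any measurable η₀ : [0,1] → [0,1]. -/

import Mathlib

/-! Write `η = N / D` with `N(s) = ∫ η₀ k_s dμ`, `D(s) = ∫ k_s dμ` and `k_s = kerW h s`. Since
`∂ₛ k_s(u) = -(1/h) tanh((s-u)/h) k_s(u)`, the quotient rule gives
`η'(s) = -(1/h) Cov_{w_s}(η₀, tanh((s-·)/h))`; differentiating under the integral is justified by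
`k_s(u) ≤ cosh(1/h)` for `u ∈ [0,1]`, which comes from `Z(u,h) ≥ sech(1/h)`. For `s, u ∈ [0,1]` the
tanh factor is bounded by `tanh(1/h)`, and the covariance of a `[0,1]`-valued variable with one
bounded by `t` is at most `t/2`: with `m = E η₀` one has `|η₀ - m| ≤ m(1-η₀) + (1-m)η₀`, whose
mean `2m(1-m)` is at most `1/2`. -/

open Real MeasureTheory

/-- Sech kernel normalization constant `Z(u,h) = ∫₀¹ sech((t-u)/h) dt`. -/
noncomputable def Zker (u h : ℝ) : ℝ := ∫ t in (0:ℝ)..1, 1 / Real.cosh ((t - u) / h)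

/-- Unnormalized kernel weight `(1/Z(u,h))·sech((s-u)/h)`. -/
noncomputable def kerW (h s u : ℝ) : ℝ := (1 / Zker u h) * (1 / Real.cosh ((s - u) / h))

/-- Denominator `D(s) = ∫ (1/Z(u,h))·sech((s-u)/h) dμ(u)`. -/
noncomputable def Dfun (μ : Measure ℝ) (h s : ℝ) : ℝ := ∫ u, kerW h s u ∂μ

/-- Expectation of `A` under the reweighted measure `w_s` (density `kerW h s / D(s)` w.r.t. μ). -/
noncomputable def wExp (μ : Measure ℝ) (h s : ℝ) (A : ℝ → ℝ) : ℝ :=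
  (∫ u, A u * kerW h s u ∂μ) / Dfun μ h s

/-- Covariance of `A` and `B` under `w_s`. -/
noncomputable def wCov (μ : Measure ℝ) (h s : ℝ) (A B : ℝ → ℝ) : ℝ :=
  wExp μ h s (fun u => A u * B u) - wExp μ h s A * wExp μ h s B

namespace Real

lemma tanh_le_tanh {x y : ℝ} (hxy : x ≤ y) : tanh x ≤ tanh y :=
  (artanh_le_artanh_iff ⟨neg_one_lt_tanh x, tanh_lt_one x⟩ ⟨neg_one_lt_tanh y, tanh_lt_one y⟩).1
    (by simpa only [artanh_tanh] using hxy)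

lemma abs_tanh_le_tanh {x a : ℝ} (hx : |x| ≤ a) : |tanh x| ≤ tanh a := by
  rw [abs_le] at hx ⊢
  exact ⟨by simpa only [tanh_neg] using tanh_le_tanh hx.1, tanh_le_tanh hx.2⟩

lemma continuous_tanh : Continuous tanh := by
  simp_rw [funext tanh_eq_sinh_div_cosh]
  exact continuous_sinh.div continuous_cosh fun x => (cosh_pos x).ne'

lemma hasDerivAt_one_div_cosh (x : ℝ) :
    HasDerivAt (fun x => 1 / cosh x) (-tanh x * (1 / cosh x)) x := by
  simp only [one_div]
  refine ((hasDerivAt_cosh x).inv (cosh_pos x).ne').congr_deriv ?_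
  rw [tanh_eq_sinh_div_cosh]
  field_simp

end Real

lemma abs_sub_div_le_one_div {s u h : ℝ} (hh : 0 ≤ h) (hs : s ∈ Set.Icc (0:ℝ) 1)
    (hu : u ∈ Set.Icc (0:ℝ) 1) : |(s - u) / h| ≤ 1 / h := by
  rw [abs_div, abs_of_nonneg hh]
  refine div_le_div_of_nonneg_right (abs_le.2 ⟨?_, ?_⟩) hh <;> linarith [hs.1, hs.2, hu.1, hu.2]

lemma one_div_cosh_le_one_div_cosh_sub_div {s u h : ℝ} (hh : 0 ≤ h) (hs : s ∈ Set.Icc (0:ℝ) 1)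
    (hu : u ∈ Set.Icc (0:ℝ) 1) : 1 / cosh (1 / h) ≤ 1 / cosh ((s - u) / h) := by
  gcongr
  exact cosh_le_cosh.2 ((abs_sub_div_le_one_div hh hs hu).trans (le_abs_self _))

lemma continuous_uncurry_one_div_cosh_sub_div (h : ℝ) :
    Continuous (Function.uncurry fun u t : ℝ => 1 / cosh ((t - u) / h)) :=
  continuous_const.div (continuous_cosh.comp (by fun_prop)) fun _ => (cosh_pos _).ne'

lemma intervalIntegrable_one_div_cosh_sub_div (u h : ℝ) :
    IntervalIntegrable (fun t => 1 / cosh ((t - u) / h)) volume 0 1 :=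
  ((continuous_uncurry_one_div_cosh_sub_div h).comp
    (continuous_const.prodMk continuous_id)).intervalIntegrable 0 1

lemma Zker_pos (u h : ℝ) : 0 < Zker u h :=
  intervalIntegral.intervalIntegral_pos_of_pos_on
    (intervalIntegrable_one_div_cosh_sub_div u h)
    (fun _ _ => by positivity) zero_lt_one

lemma continuous_Zker (h : ℝ) : Continuous fun u => Zker u h :=
  intervalIntegral.continuous_parametric_intervalIntegral_of_continuous'
    (continuous_uncurry_one_div_cosh_sub_div h) 0 1

lemma one_div_cosh_le_Zker {u h : ℝ} (hh : 0 ≤ h) (hu : u ∈ Set.Icc (0:ℝ) 1) :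
    1 / cosh (1 / h) ≤ Zker u h := by
  simpa [Zker] using intervalIntegral.integral_mono_on zero_le_one intervalIntegrable_const
    (intervalIntegrable_one_div_cosh_sub_div u h)
    fun t ht => one_div_cosh_le_one_div_cosh_sub_div hh ht hu

lemma kerW_pos (h s u : ℝ) : 0 < kerW h s u := by
  have := Zker_pos u h
  unfold kerW
  positivity

lemma kerW_le_cosh {h u : ℝ} (s : ℝ) (hh : 0 ≤ h) (hu : u ∈ Set.Icc (0:ℝ) 1) :
    kerW h s u ≤ cosh (1 / h) := calc
  kerW h s u ≤ 1 / Zker u h * 1 := by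
    have := Zker_pos u h
    unfold kerW
    gcongr
    exact div_le_one_of_le₀ (one_le_cosh _) (cosh_pos _).le
  _ ≤ cosh (1 / h) := by
    rw [mul_one, one_div_le (Zker_pos u h) (cosh_pos _)]
    exact one_div_cosh_le_Zker hh hu

lemma continuous_kerW (h s : ℝ) : Continuous (kerW h s) :=
  (continuous_const.div (continuous_Zker h) fun u => (Zker_pos u h).ne').mul
    ((continuous_uncurry_one_div_cosh_sub_div h).comp (continuous_id.prodMk continuous_const))

lemma hasDerivAt_kerW (h u x : ℝ) :
    HasDerivAt (fun x => kerW h x u) (-(1 / h) * tanh ((x - u) / h) * kerW h x u) x := by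
  have hlin : HasDerivAt (fun x : ℝ => (x - u) / h) (1 / h) x := by
    simpa using ((hasDerivAt_id x).sub_const u).div_const h
  refine (((hasDerivAt_one_div_cosh _).comp x hlin).const_mul (1 / Zker u h)).congr_deriv ?_
  simp only [kerW]
  ring

section WeightedIntegrals

variable {μ : Measure ℝ} [IsFiniteMeasure μ] {h : ℝ}

lemma integrable_kerW (hae : ∀ᵐ u ∂μ, u ∈ Set.Icc (0:ℝ) 1) (hh : 0 ≤ h) (s : ℝ) :
    Integrable (kerW h s) μ :=
  .of_bound (continuous_kerW h s).aestronglyMeasurable (cosh (1 / h)) <| hae.mono fun u hu => by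
    rw [norm_of_nonneg (kerW_pos h s u).le]
    exact kerW_le_cosh s hh hu

lemma integrable_mul_kerW (hae : ∀ᵐ u ∂μ, u ∈ Set.Icc (0:ℝ) 1) (hh : 0 ≤ h) (s : ℝ)
    {g : ℝ → ℝ} {C : ℝ} (hg : AEStronglyMeasurable g μ) (hgC : ∀ᵐ u ∂μ, |g u| ≤ C) :
    Integrable (fun u => g u * kerW h s u) μ :=
  (integrable_kerW hae hh s).bdd_mul hg hgC

lemma hasDerivAt_integral_mul_kerW (hae : ∀ᵐ u ∂μ, u ∈ Set.Icc (0:ℝ) 1) (hh : 0 < h) (s : ℝ)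
    {g : ℝ → ℝ} {C : ℝ} (hg : AEStronglyMeasurable g μ) (hgC : ∀ᵐ u ∂μ, |g u| ≤ C) :
    HasDerivAt (fun x => ∫ u, g u * kerW h x u ∂μ)
      (-(1 / h) * ∫ u, g u * tanh ((s - u) / h) * kerW h s u ∂μ) s := by
  have key := hasDerivAt_integral_of_dominated_loc_of_deriv_le (μ := μ) (x₀ := s)
    (F := fun x u => g u * kerW h x u)
    (F' := fun x u => g u * (-(1 / h) * tanh ((x - u) / h) * kerW h x u))
    (bound := fun _ => C * (1 / h * 1 * cosh (1 / h))) Filter.univ_mem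
    (.of_forall fun x => hg.mul (continuous_kerW h x).aestronglyMeasurable)
    (integrable_mul_kerW hae hh.le s hg hgC)
    (hg.mul ((continuous_const.mul (continuous_tanh.comp (by fun_prop))).mul
      (continuous_kerW h s)).aestronglyMeasurable)
    (by
      filter_upwards [hae, hgC] with u hu hgu x _
      have hgu' : ‖g u‖ ≤ C := hgu
      have hC : 0 ≤ C := (abs_nonneg _).trans hgu
      have hk0 := (kerW_pos h x u).le
      have hk := kerW_le_cosh x hh.le hu
      have htanh : ‖tanh ((x - u) / h)‖ ≤ 1 := (abs_tanh_lt_one _).le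
      rw [norm_mul, norm_mul, norm_mul, norm_neg, norm_of_nonneg hk0,
        norm_of_nonneg (by positivity : 0 ≤ 1 / h)]
      gcongr)
    (integrable_const _)
    (.of_forall fun u x _ => (hasDerivAt_kerW h u x).const_mul (g u))
  refine key.2.congr_deriv ?_
  rw [← integral_const_mul]
  congr 1 with u
  ring

lemma Dfun_pos [NeZero μ] (hae : ∀ᵐ u ∂μ, u ∈ Set.Icc (0:ℝ) 1) (hh : 0 ≤ h) (s : ℝ) :
    0 < Dfun μ h s := by
  refine (integral_pos_iff_support_of_nonneg (fun u => (kerW_pos h s u).le)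
    (integrable_kerW hae hh s)).2 ?_
  rw [Function.support_eq_univ fun u => (kerW_pos h s u).ne']
  exact Measure.measure_univ_pos.2 (NeZero.ne μ)

lemma hasDerivAt_Dfun (hae : ∀ᵐ u ∂μ, u ∈ Set.Icc (0:ℝ) 1) (hh : 0 < h) (s : ℝ) :
    HasDerivAt (Dfun μ h) (-(1 / h) * ∫ u, tanh ((s - u) / h) * kerW h s u ∂μ) s := by
  unfold Dfun
  simpa only [one_mul] using
    hasDerivAt_integral_mul_kerW hae hh s (g := fun _ => 1) aestronglyMeasurable_const
      (.of_forall fun _ => le_of_eq abs_one)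

lemma hasDerivAt_wExp [NeZero μ] (hae : ∀ᵐ u ∂μ, u ∈ Set.Icc (0:ℝ) 1) (hh : 0 < h) (s : ℝ)
    {A : ℝ → ℝ} {C : ℝ} (hA : AEStronglyMeasurable A μ) (hAC : ∀ᵐ u ∂μ, |A u| ≤ C) :
    HasDerivAt (fun x => wExp μ h x A) (-(1 / h) * wCov μ h s A fun u => tanh ((s - u) / h)) s := by
  refine ((hasDerivAt_integral_mul_kerW hae hh s hA hAC).div (hasDerivAt_Dfun hae hh s)
    (Dfun_pos hae hh.le s).ne').congr_deriv ?_
  simp only [wCov, wExp]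
  field_simp
  ring

end WeightedIntegrals

lemma abs_mul_sub_le_of_mem_Icc {W F x : ℝ} (hF : 0 ≤ F) (hFW : F ≤ W)
    (hx : x ∈ Set.Icc (0:ℝ) 1) : |W * x - F| ≤ F * (1 - x) + (W - F) * x := by
  rw [abs_le]
  constructor <;> nlinarith [hx.1, hx.2]

theorem abs_integral_mul_sub_integral_mul_le {α : Type*} [MeasurableSpace α] {μ : Measure α}
    {w f g : α → ℝ} {t : ℝ} (hw : ∀ᵐ a ∂μ, 0 ≤ w a) (hf : ∀ᵐ a ∂μ, f a ∈ Set.Icc (0:ℝ) 1)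
    (hg : ∀ᵐ a ∂μ, |g a| ≤ t) (ht : 0 ≤ t) (hwi : Integrable w μ)
    (hfw : Integrable (fun a => f a * w a) μ) (hgw : Integrable (fun a => g a * w a) μ)
    (hfgw : Integrable (fun a => f a * g a * w a) μ) :
    |(∫ a, w a ∂μ) * (∫ a, f a * g a * w a ∂μ) - (∫ a, f a * w a ∂μ) * ∫ a, g a * w a ∂μ|
      ≤ t / 2 * (∫ a, w a ∂μ) ^ 2 := by
  set W := ∫ a, w a ∂μ
  set F := ∫ a, f a * w a ∂μ
  have hF : 0 ≤ F := integral_nonneg_of_ae <| by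
    filter_upwards [hw, hf] with a hwa hfa
    exact mul_nonneg hfa.1 hwa
  have hFW : F ≤ W := integral_mono_ae hfw hwi <| by
    filter_upwards [hw, hf] with a hwa hfa
    exact mul_le_of_le_one_left hwa hfa.2
  have hcentred : (fun a => W * (f a * g a * w a) - F * (g a * w a))
      = fun a => (W * f a - F) * g a * w a := by
    ext a
    ring
  have hint : Integrable (fun a => (W * f a - F) * g a * w a) μ :=
    hcentred ▸ (hfgw.const_mul W).sub (hgw.const_mul F)
  have hmajor : ∀ᵐ a ∂μ,
      |(W * f a - F) * g a * w a| ≤ t * F * w a + t * (W - 2 * F) * (f a * w a) := by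
    filter_upwards [hw, hf, hg] with a hwa hfa hga
    rw [abs_mul, abs_mul, abs_of_nonneg hwa]
    calc |W * f a - F| * |g a| * w a ≤ (F * (1 - f a) + (W - F) * f a) * t * w a := by
          gcongr
          · nlinarith [hfa.1, hfa.2]
          · exact abs_mul_sub_le_of_mem_Icc hF hFW hfa
      _ = t * F * w a + t * (W - 2 * F) * (f a * w a) := by ring
  calc |W * (∫ a, f a * g a * w a ∂μ) - F * ∫ a, g a * w a ∂μ|
      = |∫ a, (W * f a - F) * g a * w a ∂μ| := by
        rw [← integral_const_mul, ← integral_const_mul,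
          ← integral_sub (hfgw.const_mul _) (hgw.const_mul _), hcentred]
    _ ≤ ∫ a, |(W * f a - F) * g a * w a| ∂μ := abs_integral_le_integral_abs
    _ ≤ ∫ a, t * F * w a + t * (W - 2 * F) * (f a * w a) ∂μ :=
        integral_mono_ae hint.abs ((hwi.const_mul _).add (hfw.const_mul _)) hmajor
    _ = 2 * t * F * (W - F) := by
        rw [integral_add (hwi.const_mul _) (hfw.const_mul _), integral_const_mul,
          integral_const_mul]
        ring
    _ ≤ t / 2 * W ^ 2 := by nlinarith [mul_nonneg ht (sq_nonneg (W - 2 * F))]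

lemma abs_wCov_le {μ : Measure ℝ} [IsFiniteMeasure μ] [NeZero μ] {h : ℝ}
    (hae : ∀ᵐ u ∂μ, u ∈ Set.Icc (0:ℝ) 1) (hh : 0 ≤ h) (s : ℝ) {A B : ℝ → ℝ} {t : ℝ}
    (hA : AEStronglyMeasurable A μ) (hA01 : ∀ᵐ u ∂μ, A u ∈ Set.Icc (0:ℝ) 1)
    (hB : AEStronglyMeasurable B μ) (hBt : ∀ᵐ u ∂μ, |B u| ≤ t) :
    |wCov μ h s A B| ≤ t / 2 := by
  have hD := Dfun_pos hae hh s
  have ht : 0 ≤ t := let ⟨_, hu⟩ := hBt.exists; (abs_nonneg _).trans hu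
  have hA1 : ∀ᵐ u ∂μ, |A u| ≤ 1 := hA01.mono fun _ hu => (abs_of_nonneg hu.1).trans_le hu.2
  have hABt : ∀ᵐ u ∂μ, |A u * B u| ≤ t := by
    filter_upwards [hA1, hBt] with u hAu hBu
    rw [abs_mul]
    nlinarith [abs_nonneg (A u), abs_nonneg (B u)]
  have key := abs_integral_mul_sub_integral_mul_le (.of_forall fun u => (kerW_pos h s u).le)
    hA01 hBt ht (integrable_kerW hae hh s) (integrable_mul_kerW hae hh s hA hA1)
    (integrable_mul_kerW hae hh s hB hBt) (integrable_mul_kerW hae hh s (hA.mul hB) hABt)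
  have hcov : wCov μ h s A B = (Dfun μ h s * (∫ u, A u * B u * kerW h s u ∂μ)
      - (∫ u, A u * kerW h s u ∂μ) * ∫ u, B u * kerW h s u ∂μ) / Dfun μ h s ^ 2 := by
    simp only [wCov, wExp]
    field_simp
  rw [hcov, abs_div, abs_of_pos (pow_pos hD 2), div_le_iff₀ (pow_pos hD 2)]
  exact key

theorem perturbed_calibration_lipschitz_bound
    (μ : Measure ℝ) [IsProbabilityMeasure μ] (hsupp : μ (Set.Icc (0:ℝ) 1) = 1)
    (η₀ : ℝ → ℝ) (hη₀meas : Measurable η₀) (hη₀b : ∀ u ∈ Set.Icc (0:ℝ) 1, η₀ u ∈ Set.Icc (0:ℝ) 1)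
    (h : ℝ) (hh : 0 < h) :
    (∀ s ∈ Set.Icc (0:ℝ) 1,
        |deriv (fun s' => wExp μ h s' η₀) s| ≤ Real.tanh (1 / h) / (2 * h)) ∧
    Real.tanh (1 / h) / (2 * h) ≤ 1 / (2 * h) := by
  refine ⟨fun s hs => ?_, by gcongr; exact (tanh_lt_one _).le⟩
  have hae : ∀ᵐ u ∂μ, u ∈ Set.Icc (0:ℝ) 1 :=
    (ae_mem_iff_measure_eq measurableSet_Icc.nullMeasurableSet).2 (by rw [hsupp, measure_univ])
  have hη₀ : ∀ᵐ u ∂μ, η₀ u ∈ Set.Icc (0:ℝ) 1 := hae.mono hη₀b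
  have hcov : |wCov μ h s η₀ fun u => tanh ((s - u) / h)| ≤ tanh (1 / h) / 2 :=
    abs_wCov_le hae hh.le s hη₀meas.aestronglyMeasurable hη₀
      (continuous_tanh.comp (by fun_prop)).aestronglyMeasurable
      (hae.mono fun u hu => abs_tanh_le_tanh (abs_sub_div_le_one_div hh.le hs hu))
  have hderiv := hasDerivAt_wExp hae hh s hη₀meas.aestronglyMeasurable
    (hη₀.mono fun _ hu => (abs_of_nonneg hu.1).trans_le hu.2)
  rw [hderiv.deriv, abs_mul, abs_neg, abs_of_pos (one_div_pos.2 hh)]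
  calc 1 / h * |wCov μ h s η₀ fun u => tanh ((s - u) / h)| ≤ 1 / h * (tanh (1 / h) / 2) := by
        gcongr
    _ = tanh (1 / h) / (2 * h) := by ring
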